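/- arXiv:2404.10750 — 4 statements merged into one kernel-verified Lean document; each statement's English description precedes it below -/
import Mathlib

section
/- Let k be a positive integer. Every digraph D with more than (k−1)·|V(D)| arcs has a subdigraph D' with at least one arc such that every vertex of D' has out-degree either 0 or at least k/2, and in-degree either 0 or at least k/2 (i.e., D' has minimum pseudo-semidegree at least k/2). -/
open Finset

section Defs

variable {V W : Type*}

/-- Number of arcs of a digraph given by a Boolean adjacency relation. -/
def arcCount [Fintype V] (A : V → V → Bool) : ℕ :=
  ((univ : Finset (V × V)).filter (fun p => A p.1 p.2)).card

/-- Out-neighbourhood. -/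
def outNbr [Fintype V] (A : V → V → Bool) (a : V) : Finset V :=
  univ.filter (fun v => A a v)

/-- In-neighbourhood. -/
def inNbr [Fintype V] (A : V → V → Bool) (a : V) : Finset V :=
  univ.filter (fun v => A v a)

/-- Neighbourhood with a sign: `true` = out, `false` = in. -/
def nbr [Fintype V] (A : V → V → Bool) (sign : Bool) (a : V) : Finset V :=
  if sign then outNbr A a else inNbr A a

/-- Total degree (out-degree plus in-degree). -/
def totalDeg [Fintype V] (A : V → V → Bool) (a : V) : ℕ :=
  (outNbr A a).card + (inNbr A a).card

/-- Maximum total degree `Δ`. -/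
def maxDeg [Fintype V] (A : V → V → Bool) : ℕ :=
  univ.sup (totalDeg A)

/-- Second largest element `Δ₂` of the multiset of total degrees. -/
def secondMaxDeg [Fintype V] (A : V → V → Bool) : ℕ :=
  (((univ : Finset V).val.map (totalDeg A)).erase (maxDeg A)).sup

/-- Loopless digraph. -/
def Loopless (A : V → V → Bool) : Prop := ∀ v, ¬ A v v

/-- Antidirected digraph: no directed path with two arcs. -/
def Antidirected (A : V → V → Bool) : Prop := ∀ x y z, A x y → A y z → False

/-- The underlying (undirected) simple graph of a digraph. -/
def underG (A : V → V → Bool) : SimpleGraph V :=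
  SimpleGraph.fromRel (fun x y => A x y)

/-- `𝒦_{2,s}`-freeness: no two distinct vertices `a`, `b` together with signs and `s`
distinct vertices (all different from `a` and `b`) lying in both signed neighbourhoods. -/
def K2sFree [Fintype V] [DecidableEq V] (A : V → V → Bool) (s : ℕ) : Prop :=
  ¬ ∃ (a b : V) (sa sb : Bool) (S : Finset V), a ≠ b ∧ S.card = s ∧
      a ∉ S ∧ b ∉ S ∧ S ⊆ nbr A sa a ∩ nbr A sb b

/-- `T` embeds in `A`: there is an injective arc-preserving map. -/
def Embeds (T : W → W → Bool) (A : V → V → Bool) : Prop :=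
  ∃ f : W → V, Function.Injective f ∧ ∀ x y, T x y → A (f x) (f y)

/-- Vertices of positive out-degree. -/
def outVerts [Fintype V] (A : V → V → Bool) : Finset V :=
  univ.filter (fun v => (outNbr A v).card ≠ 0)

/-- Vertices of positive in-degree. -/
def inVerts [Fintype V] (A : V → V → Bool) : Finset V :=
  univ.filter (fun v => (inNbr A v).card ≠ 0)

/-- A caterpillar: a tree with a path such that every vertex is on the path
or adjacent to it. -/
def IsCaterpillarG {X : Type*} (G : SimpleGraph X) : Prop :=
  G.IsTree ∧ ∃ (x y : X) (P : G.Walk x y), P.IsPath ∧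
    ∀ v, v ∈ P.support ∨ ∃ w ∈ P.support, G.Adj v w

/-- Minimum pseudo-semidegree at least `m`: at least one arc, and every
out-degree and in-degree is `0` or at least `m`. -/
def MinPseudoSemidegGe [Fintype V] (A : V → V → Bool) (m : ℕ) : Prop :=
  0 < arcCount A ∧ (∀ v, (outNbr A v).card = 0 ∨ m ≤ (outNbr A v).card) ∧
    (∀ v, (inNbr A v).card = 0 ∨ m ≤ (inNbr A v).card)

/-- `D'` is a subdigraph of `D` with vertex set `S`. -/
def SubdigraphOn (D : V → V → Bool) (S : Finset V) (D' : V → V → Bool) : Prop :=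
  ∀ x y, D' x y → D x y ∧ x ∈ S ∧ y ∈ S

/-- The vertex set of the double broom `B_{uv}(T)`: the path joining `u` and `v`
together with all neighbours of `u` and all neighbours of `v`. -/
def broomSet [Fintype W] [DecidableEq W] (T : W → W → Bool) {u v : W}
    (p : (underG T).Walk u v) : Finset W :=
  p.support.toFinset ∪ (outNbr T u ∪ inNbr T u) ∪ (outNbr T v ∪ inNbr T v)

/-- `z` lies strictly after `x` and strictly before `y` in clockwise (cyclic) order
on `Fin n`. -/
def cycBetween {n : ℕ} (x y z : Fin n) : Prop :=
  if x < y then x < z ∧ z < y else x < z ∨ z < y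

/-- An arc `pq` of the convex digraph `A` on `Fin n` is good for the antidirected
caterpillar `T` with final vertex `u`, its spine neighbour `v`, and spine with
`plen` edges (so `plen + 1` spine vertices). -/
def GoodArc {n : ℕ} (A : Fin n → Fin n → Bool) (T : W → W → Bool)
    (u v : W) (plen : ℕ) (pq : Fin n × Fin n) : Prop :=
  ∃ f : W → Fin n, Function.Injective f ∧ (∀ x y, T x y → A (f x) (f y)) ∧
    ((T v u = true ∧ (f v, f u) = pq) ∨ (T u v = true ∧ (f u, f v) = pq)) ∧
    (∀ z : Fin n,
      (plen % 2 = 0 → cycBetween (f u) (f v) z → z ∉ Set.range f) ∧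
      (plen % 2 = 1 → z ≠ f u → z ≠ f v → ¬ cycBetween (f u) (f v) z →
        z ∉ Set.range f))

/-- Number of edges of a bipartite graph with parts `α`, `β`. -/
def bipArcCount {α β : Type*} [Fintype α] [Fintype β] (E : α → β → Bool) : ℕ :=
  ((univ : Finset (α × β)).filter (fun p => E p.1 p.2)).card

/-- Degree of a vertex of the `α` part. -/
def bipDegA {α β : Type*} [Fintype β] (E : α → β → Bool) (a : α) : ℕ :=
  (univ.filter (fun b => E a b)).card

/-- Degree of a vertex of the `β` part. -/
def bipDegB {α β : Type*} [Fintype α] (E : α → β → Bool) (b : β) : ℕ :=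
  (univ.filter (fun a => E a b)).card

end Defs

/-! Call `m (|V⁺| + |V⁻|)` the budget of a digraph, where `V⁺` (`V⁻`) is the set of vertices of
positive out-degree (in-degree); the digraph has an arc surplus over `m` if it has more arcs than
its budget. For `m = ⌊(k - 1)/2⌋` the digraph `D` has a surplus, since `|V⁺| + |V⁻| ≤ 2|V|`.
Among the subdigraphs with a surplus take one with the fewest arcs. If it had a vertex of
out-degree `c` with `0 < c ≤ m`, deleting its `c` out-arcs would remove that vertex from `V⁺`,
so the budget falls by `m ≥ c` and the surplus survives; in-degrees are handled by reversing
all arcs. -/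

section PseudoSemidegree

variable {V : Type*} [Fintype V]

def reverse (A : V → V → Bool) : V → V → Bool := fun x y => A y x

def deleteOut [DecidableEq V] (A : V → V → Bool) (v : V) : V → V → Bool :=
  fun x y => A x y && decide (x ≠ v)

lemma arcCount_eq_sum_card_outNbr (A : V → V → Bool) :
    arcCount A = ∑ x, (outNbr A x).card := by
  rw [arcCount, card_filter, ← univ_product_univ, sum_product]
  simp only [outNbr, card_filter]

lemma arcCount_reverse (A : V → V → Bool) : arcCount (reverse A) = arcCount A :=
  card_equiv (Equiv.prodComm V V) fun _ => by simp only [mem_filter, mem_univ, true_and]; rfl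

lemma outNbr_mono {A B : V → V → Bool} (h : ∀ x y, A x y → B x y) (v : V) :
    outNbr A v ⊆ outNbr B v := by
  intro y
  simpa [outNbr] using h v y

lemma outVerts_mono {A B : V → V → Bool} (h : ∀ x y, A x y → B x y) :
    outVerts A ⊆ outVerts B := by
  intro v hv
  simp only [outVerts, mem_filter, mem_univ, true_and, ← pos_iff_ne_zero] at hv ⊢
  exact hv.trans_le (card_le_card (outNbr_mono h v))

lemma inVerts_mono {A B : V → V → Bool} (h : ∀ x y, A x y → B x y) :
    inVerts A ⊆ inVerts B :=
  outVerts_mono (A := reverse A) (B := reverse B) fun x y => h y x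

section DeleteOut

variable [DecidableEq V] (A : V → V → Bool) (v : V)

lemma outNbr_deleteOut (x : V) :
    outNbr (deleteOut A v) x = if x = v then ∅ else outNbr A x := by
  split_ifs with hx <;> ext y <;> simp [outNbr, deleteOut, hx]

lemma arcCount_deleteOut_add :
    arcCount (deleteOut A v) + (outNbr A v).card = arcCount A := by
  simp only [arcCount_eq_sum_card_outNbr, outNbr_deleteOut, apply_ite card, card_empty]
  rw [← sum_erase_add _ _ (mem_univ v), ← sum_erase_add univ _ (mem_univ v), if_pos rfl,
    sum_congr rfl fun x hx => if_neg (ne_of_mem_erase hx)]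
  rfl

lemma outVerts_deleteOut_subset : outVerts (deleteOut A v) ⊆ (outVerts A).erase v := by
  intro x hx
  refine mem_erase.2 ⟨?_, outVerts_mono (fun _ _ h => by simp_all [deleteOut]) hx⟩
  rintro rfl
  simp [outVerts, outNbr_deleteOut] at hx

end DeleteOut

def HasArcSurplus (m : ℕ) (A : V → V → Bool) : Prop :=
  m * ((outVerts A).card + (inVerts A).card) < arcCount A

lemma HasArcSurplus.arcCount_pos {m : ℕ} {A : V → V → Bool} (h : HasArcSurplus m A) :
    0 < arcCount A :=
  (Nat.zero_le _).trans_lt h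

lemma hasArcSurplus_reverse {m : ℕ} {A : V → V → Bool} :
    HasArcSurplus m (reverse A) ↔ HasArcSurplus m A := by
  rw [HasArcSurplus, HasArcSurplus, arcCount_reverse, add_comm]
  rfl

lemma HasArcSurplus.exists_of_card_outNbr_le {m : ℕ} {A : V → V → Bool}
    (hA : HasArcSurplus m A) {v : V} (hv₀ : (outNbr A v).card ≠ 0)
    (hvm : (outNbr A v).card ≤ m) :
    ∃ A' : V → V → Bool, (∀ x y, A' x y → A x y) ∧ arcCount A' < arcCount A ∧
      HasArcSurplus m A' := by
  classical
  have hsub : ∀ x y, deleteOut A v x y → A x y := fun x y h => by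
    simp_all [deleteOut]
  have hv : v ∈ outVerts A := by simpa [outVerts] using hv₀
  have hout := card_le_card (outVerts_deleteOut_subset A v)
  rw [card_erase_of_mem hv] at hout
  have hin := card_le_card (inVerts_mono hsub)
  have hpos := card_pos.2 ⟨v, hv⟩
  have hcount := arcCount_deleteOut_add A v
  have hdrop : m * ((outVerts (deleteOut A v)).card + (inVerts (deleteOut A v)).card) + m ≤
      m * ((outVerts A).card + (inVerts A).card) := by
    rw [← mul_add_one]
    exact Nat.mul_le_mul_left m (by omega)
  refine ⟨deleteOut A v, hsub, by omega, ?_⟩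
  unfold HasArcSurplus at hA ⊢
  linarith

lemma HasArcSurplus.exists_of_card_inNbr_le {m : ℕ} {A : V → V → Bool}
    (hA : HasArcSurplus m A) {v : V} (hv₀ : (inNbr A v).card ≠ 0)
    (hvm : (inNbr A v).card ≤ m) :
    ∃ A' : V → V → Bool, (∀ x y, A' x y → A x y) ∧ arcCount A' < arcCount A ∧
      HasArcSurplus m A' := by
  obtain ⟨A', hsub, hlt, hA'⟩ :=
    (hasArcSurplus_reverse.2 hA).exists_of_card_outNbr_le (v := v) hv₀ hvm
  refine ⟨reverse A', fun x y h => hsub y x h, ?_, hasArcSurplus_reverse.2 hA'⟩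
  rwa [arcCount_reverse, ← arcCount_reverse A]

theorem HasArcSurplus.exists_minPseudoSemidegGe {m : ℕ} {D : V → V → Bool}
    (hD : HasArcSurplus m D) :
    ∃ D' : V → V → Bool, (∀ x y, D' x y → D x y) ∧ MinPseudoSemidegGe D' (m + 1) := by
  induction h : arcCount D using Nat.strong_induction_on generalizing D with
  | _ n ih =>
  by_cases hout : ∃ v, (outNbr D v).card ≠ 0 ∧ (outNbr D v).card ≤ m
  · obtain ⟨v, hv₀, hvm⟩ := hout
    obtain ⟨A, hAD, hlt, hA⟩ := hD.exists_of_card_outNbr_le hv₀ hvm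
    obtain ⟨D', hD'A, hD'⟩ := ih _ (h ▸ hlt) hA rfl
    exact ⟨D', fun x y hxy => hAD x y (hD'A x y hxy), hD'⟩
  by_cases hin : ∃ v, (inNbr D v).card ≠ 0 ∧ (inNbr D v).card ≤ m
  · obtain ⟨v, hv₀, hvm⟩ := hin
    obtain ⟨A, hAD, hlt, hA⟩ := hD.exists_of_card_inNbr_le hv₀ hvm
    obtain ⟨D', hD'A, hD'⟩ := ih _ (h ▸ hlt) hA rfl
    exact ⟨D', fun x y hxy => hAD x y (hD'A x y hxy), hD'⟩
  push Not at hout hin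
  refine ⟨D, fun _ _ => id, hD.arcCount_pos, fun v => ?_, fun v => ?_⟩
  · have := hout v
    omega
  · have := hin v
    omega

end PseudoSemidegree

theorem stmt_5_general (k : ℕ)
    {V : Type*} [Fintype V]
    (D : V → V → Bool)
    (harcs : (k - 1) * Fintype.card V < arcCount D) :
    ∃ D' : V → V → Bool, (∀ x y, D' x y → D x y) ∧ 0 < arcCount D' ∧
      (∀ v, (outNbr D' v).card = 0 ∨ k ≤ 2 * (outNbr D' v).card) ∧
      (∀ v, (inNbr D' v).card = 0 ∨ k ≤ 2 * (inNbr D' v).card) := by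
  have hsurplus : HasArcSurplus ((k - 1) / 2) D := by
    have hout : (outVerts D).card ≤ Fintype.card V := card_le_univ _
    have hin : (inVerts D).card ≤ Fintype.card V := card_le_univ _
    calc (k - 1) / 2 * ((outVerts D).card + (inVerts D).card)
        ≤ (k - 1) / 2 * (2 * Fintype.card V) := Nat.mul_le_mul_left _ (by omega)
      _ ≤ (k - 1) * Fintype.card V := by
        rw [← mul_assoc]
        exact Nat.mul_le_mul_right _ (Nat.div_mul_le_self _ _)
      _ < arcCount D := harcs
  obtain ⟨D', hD'D, hpos, hout, hin⟩ := hsurplus.exists_minPseudoSemidegGe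
  refine ⟨D', hD'D, hpos, fun v => ?_, fun v => ?_⟩
  · have := hout v
    omega
  · have := hin v
    omega

/-- Every digraph with more than `(k−1)·|V(D)|` arcs has a subdigraph with at
least one arc and minimum pseudo-semidegree at least `k/2`. -/
theorem stmt_5 (k : ℕ) (hk : 0 < k)
    {V : Type*} [Fintype V] [DecidableEq V]
    (D : V → V → Bool) (hloop : Loopless D)
    (harcs : (k - 1) * Fintype.card V < arcCount D) :
    ∃ D' : V → V → Bool, (∀ x y, D' x y → D x y) ∧ 0 < arcCount D' ∧
      (∀ v, (outNbr D' v).card = 0 ∨ k ≤ 2 * (outNbr D' v).card) ∧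
      (∀ v, (inNbr D' v).card = 0 ∨ k ≤ 2 * (inNbr D' v).card) :=
  stmt_5_general k D harcs
end

section
/- Let k, n be positive integers, let T be an antidirected caterpillar with k arcs, and let D be a convex digraph of order n. Then D contains at least a(D) − (k−1)·n arcs that are good for T. -/
open Finset

/-!
Induct on the number of vertices by deleting the final spine vertex `u`, a leaf hanging from the
penultimate vertex `v`. What remains is a caterpillar whose spine is the old one with `u` replaced
by an off-spine neighbour of `v` if there is one, and the old spine without `u` otherwise; in the
second case the spine gets shorter by one and `v` becomes its final vertex.

Reversing every arc if necessary, `v` is a source. A good arc `(b, c)` of `T - u` then comes with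
an embedding sending `v` to `b` whose image avoids an open side of the circle cut at `b` and `c`,
which side depending only on the parity of the spine of `T` (in both cases above). Sending `u` to an
out-neighbour `z` of `b` on that side turns it into the good arc `(b, z)` of `T`. Of two good arcs
of `T - u` with the same tail, the head of one lies on the free side of the other, so it is good
for `T`; hence at most one good arc of `T - u` per tail, at most `n` in all, is not good for `T`.
-/

open Set SimpleGraph

section CircularOrder

variable {α : Type*} [CircularOrder α] {a b c : α}

lemma sbtw_iff_ne_and_not_sbtw (hac : a ≠ c) : sbtw a b c ↔ b ≠ a ∧ b ≠ c ∧ ¬ sbtw c b a := by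
  refine ⟨fun h => ⟨fun hb => sbtw_irrefl_left (hb ▸ h), fun hb => sbtw_irrefl_right (hb ▸ h),
    sbtw_asymm h⟩, fun ⟨hba, hbc, h⟩ => ?_⟩
  rw [sbtw_iff_not_btw]
  intro hcba
  rcases hcba.antisymm (btw_iff_not_sbtw.mpr h) with h | h | h
  exacts [hbc h.symm, hba h, hac h]

lemma sbtw_or_sbtw (hab : a ≠ b) (hac : a ≠ c) (hbc : b ≠ c) : sbtw a b c ∨ sbtw a c b := by
  rw [or_iff_not_imp_left, sbtw_iff_ne_and_not_sbtw hab, sbtw_cyclic (a := b)]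
  exact fun h => ⟨hac.symm, hbc.symm, h⟩

end CircularOrder

lemma Set.ncard_le_ncard_add_card_of_injOn_sdiff {α β : Type*} [Finite α] [Finite β]
    {S S' : Set α} {key : α → β} (h : InjOn key (S' \ S)) : S'.ncard ≤ S.ncard + Nat.card β :=
  calc S'.ncard = (S' ∩ S).ncard + (S' \ S).ncard :=
        (ncard_inter_add_ncard_sdiff_eq_ncard S' S).symm
    _ ≤ S.ncard + Nat.card β :=
      add_le_add (ncard_le_ncard inter_subset_right) (h.ncard_image ▸ ncard_le_card _)

lemma Fintype.two_lt_card_iff_exists_ne_ne {α : Type*} [Fintype α] {a b : α} (hab : a ≠ b) :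
    2 < Fintype.card α ↔ ∃ x, x ≠ a ∧ x ≠ b := by
  classical
  refine ⟨fun h => ?_, fun ⟨x, hxa, hxb⟩ => Fintype.two_lt_card_iff.2 ⟨x, a, b, hxa, hxb, hab⟩⟩
  by_contra! hx
  have hsub : (Finset.univ : Finset α) ⊆ {a, b} := fun x _ => by
    simpa using or_iff_not_imp_left.2 (hx x)
  have := Finset.card_le_card hsub
  rw [Finset.card_univ, Finset.card_pair hab] at this
  omega

namespace SimpleGraph.Walk

variable {V : Type*} {G : SimpleGraph V} {s : Set V} {a b : V} (P : G.Walk a b)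
  (hP : ∀ x ∈ P.support, x ∈ s)

lemma length_induce : (P.induce s hP).length = P.length := by
  conv_rhs => rw [← map_induce P hP]
  exact (length_map _ _).symm

lemma isPath_induce_iff : (P.induce s hP).IsPath ↔ P.IsPath := by
  conv_rhs => rw [← map_induce P hP]
  exact (isPath_map_iff_of_injective Subtype.val_injective).symm

lemma nil_induce_iff : (P.induce s hP).Nil ↔ P.Nil := by
  conv_rhs => rw [← map_induce P hP]
  exact (nil_map_iff (f := (Embedding.induce s).toHom)).symm

lemma mem_support_induce_iff {x : s} : x ∈ (P.induce s hP).support ↔ x.1 ∈ P.support := by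
  rw [support_induce, List.mem_attachWith]

lemma val_getVert_induce (k : ℕ) : ((P.induce s hP).getVert k : V) = P.getVert k := by
  induction P generalizing k with
  | nil => rfl
  | cons h P ih => cases k <;> simp [ih]

lemma val_penultimate_induce : ((P.induce s hP).penultimate : V) = P.penultimate := by
  rw [penultimate, val_getVert_induce, length_induce]

lemma mem_support_iff_mem_support_dropLast_or_eq {Q : G.Walk a b} (hnil : ¬Q.Nil) {x : V} :
    x ∈ Q.support ↔ x ∈ Q.dropLast.support ∨ x = b := by
  rw [← support_dropLast_concat hnil, List.mem_append, List.mem_singleton]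

lemma IsPath.end_notMem_support_dropLast {Q : G.Walk a b} (hQ : Q.IsPath) (hnil : ¬Q.Nil) :
    b ∉ Q.dropLast.support := by
  rw [← concat_dropLast (Q.adj_penultimate hnil), concat_isPath_iff] at hQ
  exact hQ.2

end SimpleGraph.Walk

section Caterpillar

variable {W : Type*} {G : SimpleGraph W} {a b : W}

def IsCaterpillarSpine (P : G.Walk a b) : Prop :=
  P.IsPath ∧ ∀ x, x ∈ P.support ∨ ∃ y ∈ P.support, y ≠ a ∧ y ≠ b ∧ G.Adj x y

lemma IsCaterpillarSpine.eq_penultimate_of_adj (hG : G.IsAcyclic) {P : G.Walk a b}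
    (hP : IsCaterpillarSpine P) {x : W} (hx : G.Adj b x) : x = P.penultimate := by
  classical
  refine hG.eq_penultimate_of_adj_end hP.1 hx ?_
  rcases hP.2 x with h | ⟨y, hy, -, hyb, hxy⟩
  · exact h
  · have hy' : y ∈ P.reverse.support := by simpa using hy
    have hxP := hG.mem_support_of_ne_mem_support_of_adj_of_isPath (hP.1.reverse.takeUntil hy')
      (Path.singleton hx).2 hxy.symm (by simp [hyb, hxy.ne'])
    simpa using P.reverse.support_takeUntil_subset_support hy' hxP

lemma SimpleGraph.IsTree.induce_compl_singleton_of_adj (hG : G.IsTree) {u v : W}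
    (huv : G.Adj u v) (hleaf : ∀ x, G.Adj u x → x = v) : (G.induce {u}ᶜ).IsTree := by
  classical
  have hN : G.neighborSet u = {v} := Set.ext fun x => ⟨hleaf x, fun h => h ▸ huv⟩
  have : Fintype (G.neighborSet u) := by rw [hN]; infer_instance
  exact ⟨hG.connected.induce_compl_singleton_of_degree_eq_one
    (degree_eq_one_iff_existsUnique_adj.2 ⟨v, huv, hleaf⟩), hG.isAcyclic.induce _⟩

lemma isCaterpillarSpine_induce {s : Set W} {P : G.Walk a b} (hPs : ∀ x ∈ P.support, x ∈ s)
    (hpath : P.IsPath)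
    (hcat : ∀ x ∈ s, x ∈ P.support ∨ ∃ y ∈ P.support, y ≠ a ∧ y ≠ b ∧ G.Adj x y) :
    IsCaterpillarSpine (P.induce s hPs) := by
  refine ⟨(Walk.isPath_induce_iff P hPs).2 hpath, fun x => ?_⟩
  simp only [Walk.mem_support_induce_iff]
  rcases hcat x x.2 with h | ⟨y, hy, hya, hyb, hxy⟩
  · exact Or.inl h
  · exact Or.inr ⟨⟨y, hPs y hy⟩, hy, fun h => hya (congrArg Subtype.val h),
      fun h => hyb (congrArg Subtype.val h), hxy⟩

lemma IsCaterpillarSpine.exists_induce_compl_of_adj {w u : W} {P : G.Walk w u}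
    (hP : IsCaterpillarSpine P) (hnil : ¬P.Nil) {ℓ : W} (hvℓ : G.Adj P.penultimate ℓ)
    (hℓ : ℓ ∉ P.support) :
    ∃ (w' u' : ({u}ᶜ : Set W)) (P' : (G.induce {u}ᶜ).Walk w' u'), IsCaterpillarSpine P' ∧
      ¬P'.Nil ∧ P'.penultimate.1 = P.penultimate ∧ P'.length = P.length := by
  have hsupp x := Walk.mem_support_iff_mem_support_dropLast_or_eq (x := x) hnil
  have hu := hP.1.end_notMem_support_dropLast hnil
  have hℓ₀ : ℓ ∉ P.dropLast.support := fun h => hℓ ((hsupp ℓ).2 (Or.inl h))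
  have hs : ∀ x ∈ (P.dropLast.concat hvℓ).support, x ∈ ({u}ᶜ : Set W) := by
    simp only [Walk.support_concat, List.mem_append, List.mem_singleton]
    rintro x (hx | rfl)
    · exact fun hxu => hu (hxu ▸ hx)
    · exact fun h => hℓ (h ▸ P.end_mem_support)
  refine ⟨_, _, _, isCaterpillarSpine_induce hs (hP.1.dropLast.concat hℓ₀ hvℓ) ?_, ?_, ?_, ?_⟩
  · intro x hx
    simp only [Walk.support_concat, List.mem_append, List.mem_singleton]
    rcases hP.2 x with h | ⟨y, hy, hyw, hyu, hxy⟩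
    · exact Or.inl (Or.inl (((hsupp x).1 h).resolve_right hx))
    · exact Or.inr ⟨y, Or.inl (((hsupp y).1 hy).resolve_right hyu), hyw,
        fun h => hℓ (h ▸ hy), hxy⟩
  · rw [Walk.nil_induce_iff, Walk.not_nil_iff_lt_length, Walk.length_concat]
    omega
  · rw [Walk.val_penultimate_induce, Walk.penultimate_concat]
  · rw [Walk.length_induce, Walk.length_concat, Walk.length_dropLast_add_one hnil]

lemma IsCaterpillarSpine.exists_induce_compl_of_forall_adj {w u : W} {P : G.Walk w u}
    (hP : IsCaterpillarSpine P) (hnil : ¬P.Nil) (hB : ∀ ℓ, G.Adj P.penultimate ℓ → ℓ ∈ P.support)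
    (hx : ∃ x, x ≠ u ∧ x ≠ P.penultimate) :
    ∃ (w' u' : ({u}ᶜ : Set W)) (P' : (G.induce {u}ᶜ).Walk w' u'), IsCaterpillarSpine P' ∧
      ¬P'.Nil ∧ u'.1 = P.penultimate ∧ P'.length + 1 = P.length := by
  have hsupp x := Walk.mem_support_iff_mem_support_dropLast_or_eq (x := x) hnil
  have hu := hP.1.end_notMem_support_dropLast hnil
  have hs : ∀ x ∈ P.dropLast.support, x ∈ ({u}ᶜ : Set W) := fun x hx hxu => hu (hxu ▸ hx)
  have hwv : w ≠ P.penultimate := by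
    intro hwv
    have hsupp₀ := Walk.nil_iff_support_eq.1 (hP.1.dropLast.nil_iff_eq.2 hwv)
    obtain ⟨x, hxu, hxv⟩ := hx
    rcases hP.2 x with h | ⟨y, hy, hyw, hyu, -⟩
    · rcases (hsupp x).1 h with h | h
      · rw [hsupp₀, List.mem_singleton] at h
        exact hxv (h.trans hwv)
      · exact hxu h
    · rcases (hsupp y).1 hy with h | h
      · rw [hsupp₀, List.mem_singleton] at h
        exact hyw h
      · exact hyu h
  refine ⟨_, _, _, isCaterpillarSpine_induce hs hP.1.dropLast ?_, ?_, rfl, ?_⟩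
  · intro x hx
    rcases hP.2 x with h | ⟨y, hy, hyw, hyu, hxy⟩
    · exact Or.inl (((hsupp x).1 h).resolve_right hx)
    · have hy₀ := ((hsupp y).1 hy).resolve_right hyu
      by_cases hyv : y = P.penultimate
      · exact Or.inl (((hsupp x).1 (hB x (hyv ▸ hxy.symm))).resolve_right hx)
      · exact Or.inr ⟨y, hy₀, hyw, hyv, hxy⟩
  · rw [Walk.nil_induce_iff]
    exact hP.1.dropLast.nil_iff_eq.not.2 hwv
  · rw [Walk.length_induce, Walk.length_dropLast_add_one hnil]

lemma IsCaterpillarSpine.exists_induce_compl {w u : W} {P : G.Walk w u}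
    (hP : IsCaterpillarSpine P) (hnil : ¬P.Nil) (hx : ∃ x, x ≠ u ∧ x ≠ P.penultimate) :
    ∃ (w' u' : ({u}ᶜ : Set W)) (P' : (G.induce {u}ᶜ).Walk w' u'),
      IsCaterpillarSpine P' ∧ ¬P'.Nil ∧
      ((u'.1 = P.penultimate ∧ P'.length + 1 = P.length) ∨
        (P'.penultimate.1 = P.penultimate ∧ P'.length = P.length)) := by
  by_cases hB : ∃ ℓ, G.Adj P.penultimate ℓ ∧ ℓ ∉ P.support
  · obtain ⟨ℓ, hvℓ, hℓ⟩ := hB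
    obtain ⟨w', u', P', hP', hnil', h⟩ := hP.exists_induce_compl_of_adj hnil hvℓ hℓ
    exact ⟨w', u', P', hP', hnil', Or.inr h⟩
  · push Not at hB
    obtain ⟨w', u', P', hP', hnil', h⟩ := hP.exists_induce_compl_of_forall_adj hnil hB hx
    exact ⟨w', u', P', hP', hnil', Or.inl h⟩

end Caterpillar

section Digraph

variable {W : Type*}

def restrictArcs (T : W → W → Bool) (s : Set W) (x y : s) : Bool := T x y

lemma Loopless.ne {A : W → W → Bool} (hA : Loopless A) {x y : W} (h : A x y) : x ≠ y := by
  rintro rfl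
  exact hA x h

lemma Antidirected.ne {T : W → W → Bool} (hT : Antidirected T) {x y : W} (h : T x y) :
    x ≠ y := by
  rintro rfl
  exact hT x x x h h

lemma Antidirected.flip {T : W → W → Bool} (hT : Antidirected T) : Antidirected (flip T) :=
  fun x y z hxy hyz => hT z y x hyz hxy

lemma Antidirected.restrictArcs {T : W → W → Bool} (hT : Antidirected T) (s : Set W) :
    Antidirected (restrictArcs T s) :=
  fun x y z => hT x y z

lemma underG_adj {T : W → W → Bool} {x y : W} :
    (underG T).Adj x y ↔ x ≠ y ∧ (T x y ∨ T y x) :=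
  fromRel_adj _ _ _

lemma underG_flip (T : W → W → Bool) : underG (flip T) = underG T := by
  ext x y
  simp only [underG_adj, flip, or_comm]

lemma underG_restrictArcs (T : W → W → Bool) (s : Set W) :
    underG (restrictArcs T s) = (underG T).induce s := by
  ext x y
  simp only [underG_adj, induce_adj, restrictArcs, ne_eq, Subtype.ext_iff]

variable [Fintype W]

lemma arcCount_flip (T : W → W → Bool) : arcCount (flip T) = arcCount T := by
  unfold arcCount
  refine Finset.card_equiv (Equiv.prodComm W W) fun p => ?_
  rw [Finset.mem_filter, Finset.mem_filter]
  simp [flip]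

lemma arcCount_eq_ncard (T : W → W → Bool) : arcCount T = {p : W × W | T p.1 p.2}.ncard := by
  rw [arcCount, ← Set.ncard_coe_finset]
  congr 1
  ext p
  simp

lemma arcCount_add_one_eq_card {T : W → W → Bool} (hT : Antidirected T)
    (htree : (underG T).IsTree) : arcCount T + 1 = Fintype.card W := by
  classical
  rw [← htree.card_edgeFinset]
  congr 1
  refine Finset.card_bij (fun p _ => s(p.1, p.2)) (fun p hp => ?_) (fun p hp q hq h => ?_) ?_
  · simp only [Finset.mem_filter, Finset.mem_univ, true_and] at hp
    simpa [underG_adj] using ⟨hT.ne hp, Or.inl hp⟩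
  · simp only [Finset.mem_filter, Finset.mem_univ, true_and] at hp hq
    rcases Sym2.eq_iff.1 h with ⟨h1, h2⟩ | ⟨h1, h2⟩
    · exact Prod.ext h1 h2
    · rw [← h1, ← h2] at hq
      exact (hT _ _ _ hp hq).elim
  · intro e he
    induction e using Sym2.ind with
    | _ x y =>
      rw [mem_edgeFinset, mem_edgeSet, underG_adj] at he
      rcases he.2 with h | h
      · exact ⟨(x, y), by simpa using h, rfl⟩
      · exact ⟨(y, x), by simpa using h, Sym2.eq_swap⟩

end Digraph

section Convex

variable {n : ℕ}

lemma cycBetween_iff_sbtw {x y z : Fin n} (hxy : x ≠ y) : cycBetween x y z ↔ sbtw x z y := by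
  rw [Fin.sbtw_iff, cycBetween]
  have := Fin.val_ne_iff.mpr hxy
  simp only [Fin.lt_def]
  split_ifs <;> omega

/-- The open side of the circle that a good embedding of a caterpillar whose spine has `plen`
edges must avoid, where `b` and `c` are the images of the penultimate and the final spine
vertex. -/
def freeSide (plen : ℕ) (b c : Fin n) : Set (Fin n) :=
  if plen % 2 = 0 then cIoo c b else cIoo b c

variable {plen plen' : ℕ} {b c c' z : Fin n}

lemma left_notMem_freeSide : b ∉ freeSide plen b c := by
  unfold freeSide; split_ifs <;> simp [sbtw_irrefl_left, sbtw_irrefl_right]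

lemma right_notMem_freeSide : c ∉ freeSide plen b c := by
  unfold freeSide; split_ifs <;> simp [sbtw_irrefl_left, sbtw_irrefl_right]

lemma freeSide_subset (hz : z ∈ freeSide plen b c) : freeSide plen b z ⊆ freeSide plen b c := by
  unfold freeSide at *
  split_ifs at * with h
  · exact fun x hx => mem_cIoo.2 ((mem_cIoo.1 hz).trans_left (mem_cIoo.1 hx))
  · exact fun x hx => mem_cIoo.2 (sbtw_trans_right (mem_cIoo.1 hx) (mem_cIoo.1 hz))

lemma mem_freeSide_or_mem_freeSide (hbc : b ≠ c) (hbc' : b ≠ c') (hcc' : c ≠ c') :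
    c ∈ freeSide plen b c' ∨ c' ∈ freeSide plen b c := by
  unfold freeSide
  split_ifs
  · simp only [mem_cIoo, sbtw_cyclic (a := c'), sbtw_cyclic (a := c)]
    exact sbtw_or_sbtw hbc' hbc hcc'.symm
  · exact sbtw_or_sbtw hbc hbc' hcc'

lemma freeSide_swap (h : plen' % 2 ≠ plen % 2) : freeSide plen' c b = freeSide plen b c := by
  unfold freeSide
  split_ifs <;> first | rfl | omega

lemma forall_cycBetween_iff {a b : Fin n} (hab : a ≠ b) {R : Set (Fin n)} :
    (∀ z, (plen % 2 = 0 → cycBetween a b z → z ∉ R) ∧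
      (plen % 2 = 1 → z ≠ a → z ≠ b → ¬ cycBetween a b z → z ∉ R)) ↔
    ∀ z ∈ R, z ∉ freeSide plen b a := by
  simp only [cycBetween_iff_sbtw hab, freeSide]
  split_ifs with h
  · simp [h, imp_not_comm]
  · simp only [Nat.mod_two_ne_zero.mp h, mem_cIoo, sbtw_iff_ne_and_not_sbtw hab.symm]
    simp only [one_ne_zero, false_imp_iff, true_imp_iff, true_and, not_and, not_not]
    exact forall_congr' fun z => ⟨fun h hz hb ha => by_contra (h ha hb · hz),
      fun h ha hb hs hz => hs (h hz hb ha)⟩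

end Convex

section GoodArcs

variable {n plen plen' : ℕ} {W : Type*} {A : Fin n → Fin n → Bool} {T : W → W → Bool} {u v : W}
  {p : Fin n × Fin n}

def AnchoredArc (A : Fin n → Fin n → Bool) (T : W → W → Bool) (v : W) (plen : ℕ)
    (p : Fin n × Fin n) : Prop :=
  ∃ f : W → Fin n, Function.Injective f ∧ (∀ x y, T x y → A (f x) (f y)) ∧ f v = p.1 ∧
    ∀ x, f x ∉ freeSide plen p.1 p.2

lemma goodArc_iff (hT : Antidirected T) :
    GoodArc A T u v plen p ↔ ∃ f : W → Fin n, Function.Injective f ∧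
      (∀ x y, T x y → A (f x) (f y)) ∧
      ((T v u ∧ (f v, f u) = p) ∨ (T u v ∧ (f u, f v) = p)) ∧
      ∀ x, f x ∉ freeSide plen (f v) (f u) := by
  refine exists_congr fun f => and_congr_right fun hf => and_congr_right fun _ =>
    and_congr_right fun hor => ?_
  have huv : u ≠ v := by
    rcases hor with ⟨h, _⟩ | ⟨h, _⟩
    exacts [(hT.ne h).symm, hT.ne h]
  rw [forall_cycBetween_iff (hf.ne huv), forall_mem_range]

lemma goodArc_flip_iff :
    GoodArc (flip A) (flip T) u v plen p.swap ↔ GoodArc A T u v plen p := by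
  refine exists_congr fun f => and_congr_right fun _ => ?_
  rw [forall_comm]
  refine and_congr_right fun _ => and_congr_left fun _ => ?_
  have hswap : ∀ a b : Fin n, (a, b) = p.swap ↔ (b, a) = p := fun a b => by
    rw [← Prod.swap_inj, Prod.swap_swap, Prod.swap_prod_mk]
  rw [flip, flip, hswap, hswap, or_comm]

lemma ncard_goodArcs_flip :
    {p | flip A p.1 p.2 ∧ GoodArc (flip A) (flip T) u v plen p}.ncard =
      {p | A p.1 p.2 ∧ GoodArc A T u v plen p}.ncard := by
  rw [← Set.ncard_image_of_injective _ Prod.swap_injective]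
  congr 1
  ext p
  rw [Set.image_swap_eq_preimage_swap]
  simp only [Set.mem_preimage, Set.mem_ofPred_eq, Prod.fst_swap, Prod.snd_swap, flip]
  rw [← goodArc_flip_iff, Prod.swap_swap]
  rfl

lemma goodArc_of_forall_eq_or_eq (hT : Antidirected T) (hvu : T v u) (hW : ∀ x, x = u ∨ x = v)
    (hA : A p.1 p.2) (hp : p.1 ≠ p.2) : GoodArc A T u v plen p := by
  classical
  let f : W → Fin n := fun x => if x = u then p.2 else p.1
  have hfu : f u = p.2 := if_pos rfl
  have hfv : f v = p.1 := if_neg (hT.ne hvu)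
  rw [goodArc_iff hT]
  refine ⟨f, ?_, ?_, Or.inl ⟨hvu, by rw [hfu, hfv]⟩, ?_⟩
  · intro x y hxy
    rcases hW x with rfl | rfl <;> rcases hW y with rfl | rfl
    · rfl
    · rw [hfu, hfv] at hxy
      exact absurd hxy.symm hp
    · rw [hfu, hfv] at hxy
      exact absurd hxy hp
    · rfl
  · intro x y hxy
    rcases hW x with rfl | rfl <;> rcases hW y with rfl | rfl
    · exact absurd rfl (hT.ne hxy)
    · exact (hT _ _ _ hvu hxy).elim
    · rwa [hfu, hfv]
    · exact absurd rfl (hT.ne hxy)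
  · intro x
    rw [hfu, hfv]
    rcases hW x with rfl | rfl
    · rw [hfu]
      exact right_notMem_freeSide
    · rw [hfv]
      exact left_notMem_freeSide

lemma anchoredArc_of_goodArc (hT : Antidirected T) (hsrc : ∀ y, ¬ T y v) {u' v' : W}
    (hcase : (u' = v ∧ plen' % 2 ≠ plen % 2) ∨ (v' = v ∧ plen' = plen))
    (h : GoodArc A T u' v' plen' p) : AnchoredArc A T v plen p := by
  obtain ⟨f, hf, harc, hor, hfree⟩ := (goodArc_iff hT).1 h
  refine ⟨f, hf, harc, ?_⟩
  rcases hcase with ⟨rfl, hpar⟩ | ⟨rfl, rfl⟩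
  · rcases hor with ⟨h, _⟩ | ⟨_, rfl⟩
    · exact absurd h (hsrc _)
    · exact ⟨rfl, by rwa [← freeSide_swap hpar]⟩
  · rcases hor with ⟨_, rfl⟩ | ⟨h, _⟩
    · exact ⟨rfl, hfree⟩
    · exact absurd h (hsrc _)

lemma goodArc_of_anchoredArc (hT : Antidirected T) {v : ({u}ᶜ : Set W)} (hvu : T v u)
    (hleaf : ∀ x, T x u → x = v) (hp : AnchoredArc A (restrictArcs T {u}ᶜ) v plen p)
    {z : Fin n} (hz : A p.1 z) (hzfree : z ∈ freeSide plen p.1 p.2) :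
    GoodArc A T u v plen (p.1, z) := by
  classical
  obtain ⟨f, hf, harc, hfv, hfree⟩ := hp
  have hzf : ∀ x, f x ≠ z := fun x hx => hfree x (hx ▸ hzfree)
  let F : W → Fin n := fun x => if hx : x = u then z else f ⟨x, hx⟩
  have hFu : F u = z := dif_pos rfl
  have hF : ∀ x : ({u}ᶜ : Set W), F x = f x := fun x => dif_neg x.2
  have hcases : ∀ x : W, x = u ∨ ∃ x' : ({u}ᶜ : Set W), x'.1 = x :=
    fun x => (eq_or_ne x u).imp id fun hx => ⟨⟨x, hx⟩, rfl⟩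
  rw [goodArc_iff hT]
  refine ⟨F, ?_, ?_, Or.inl ⟨hvu, by rw [hF v, hfv, hFu]⟩, ?_⟩
  · intro x y hxy
    rcases hcases x with rfl | ⟨x, rfl⟩ <;> rcases hcases y with rfl | ⟨y, rfl⟩
    · rfl
    · rw [hFu, hF y] at hxy
      exact absurd hxy.symm (hzf y)
    · rw [hFu, hF x] at hxy
      exact absurd hxy (hzf x)
    · rw [hF x, hF y] at hxy
      exact congrArg _ (hf hxy)
  · intro x y hxy
    rcases hcases y with rfl | ⟨y, rfl⟩
    · rw [hleaf x hxy, hF v, hFu, hfv]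
      exact hz
    · rcases hcases x with rfl | ⟨x, rfl⟩
      · exact (hT _ _ _ hvu hxy).elim
      · rw [hF x, hF y]
        exact harc x y hxy
  · rw [hF v, hFu, hfv]
    intro x
    rcases hcases x with rfl | ⟨x, rfl⟩
    · rw [hFu]
      exact right_notMem_freeSide
    · rw [hF x]
      exact fun h => hfree x (freeSide_subset hzfree h)

lemma ncard_anchoredArcs_le (hA : Loopless A) (hT : Antidirected T) {v : ({u}ᶜ : Set W)}
    (hvu : T v u) (hleaf : ∀ x, T x u → x = v) :
    {p | A p.1 p.2 ∧ AnchoredArc A (restrictArcs T {u}ᶜ) v plen p}.ncard ≤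
      {p | A p.1 p.2 ∧ GoodArc A T u v plen p}.ncard + n := by
  set E := {p | A p.1 p.2 ∧ AnchoredArc A (restrictArcs T {u}ᶜ) v plen p}
  set S := {p | A p.1 p.2 ∧ GoodArc A T u v plen p}
  have hS : ∀ p ∈ E, ∀ q ∈ E, p.1 = q.1 → p.2 ∈ freeSide plen q.1 q.2 → p ∈ S := by
    intro p hp q hq hpq hfree
    have h := goodArc_of_anchoredArc hT hvu hleaf hq.2 (by rw [← hpq]; exact hp.1) hfree
    rw [← hpq] at h
    exact ⟨hp.1, h⟩
  simpa using Set.ncard_le_ncard_add_card_of_injOn_sdiff (S := S) (S' := E) (key := Prod.fst)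
    fun p ⟨hp, hpS⟩ q ⟨hq, hqS⟩ hpq => by
      by_contra hpq'
      have h2 : p.2 ≠ q.2 := fun h => hpq' (Prod.ext hpq h)
      rcases mem_freeSide_or_mem_freeSide (plen := plen) (hpq ▸ hA.ne hp.1) (hA.ne hq.1) h2
        with h | h
      · exact hpS (hS p hp q hq hpq h)
      · exact hqS (hS q hq p hp hpq.symm (hpq ▸ h))

lemma ncard_goodArcs_restrictArcs_le (hA : Loopless A) (hT : Antidirected T) (hvu : T v u)
    (hleaf : ∀ x, T x u → x = v) {u' v' : ({u}ᶜ : Set W)}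
    (hcase : (u'.1 = v ∧ plen' % 2 ≠ plen % 2) ∨ (v'.1 = v ∧ plen' = plen)) :
    {p | A p.1 p.2 ∧ GoodArc A (restrictArcs T {u}ᶜ) u' v' plen' p}.ncard ≤
      {p | A p.1 p.2 ∧ GoodArc A T u v plen p}.ncard + n := by
  let v₀ : ({u}ᶜ : Set W) := ⟨v, hT.ne hvu⟩
  have hsrc : ∀ y, ¬ restrictArcs T {u}ᶜ y v₀ := fun y hy => hT _ _ _ hy hvu
  have hcase' : (u' = v₀ ∧ plen' % 2 ≠ plen % 2) ∨ (v' = v₀ ∧ plen' = plen) :=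
    hcase.imp (And.imp_left Subtype.ext) (And.imp_left Subtype.ext)
  calc _ ≤ {p | A p.1 p.2 ∧ AnchoredArc A (restrictArcs T {u}ᶜ) v₀ plen p}.ncard :=
        ncard_le_ncard fun p hp =>
          ⟨hp.1, anchoredArc_of_goodArc (hT.restrictArcs _) hsrc hcase' hp.2⟩
    _ ≤ _ := ncard_anchoredArcs_le (v := v₀) hA hT hvu hleaf

-- Walks live in `G` rather than in `underG T`: after deleting `u` they lift to walks of
-- `G.induce {u}ᶜ`, which equals `underG (restrictArcs T {u}ᶜ)` only propositionally.
theorem le_ncard_goodArcs (m : ℕ) {W : Type*} [Fintype W] (T : W → W → Bool)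
    (hT : Antidirected T) (G : SimpleGraph W) (hG : underG T = G) (htree : G.IsTree)
    (hcard : Fintype.card W = m + 2) {w u : W} (P : G.Walk w u) (hP : IsCaterpillarSpine P)
    (hnil : ¬P.Nil) (A : Fin n → Fin n → Bool) (hA : Loopless A) :
    arcCount A - m * n ≤ {p | A p.1 p.2 ∧ GoodArc A T u P.penultimate P.length p}.ncard := by
  classical
  induction m using Nat.strong_induction_on generalizing W A with
  | _ m ih =>
  wlog hvu : T P.penultimate u generalizing T A
  · have huv : T u P.penultimate := by
      have hadj : (underG T).Adj P.penultimate u := hG ▸ P.adj_penultimate hnil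
      simpa [hvu] using (underG_adj.1 hadj).2
    simpa only [arcCount_flip, ncard_goodArcs_flip] using
      this (T := flip T) (A := flip A) hT.flip ((underG_flip T).trans hG) hA huv
  have hleafG : ∀ x, G.Adj u x → x = P.penultimate :=
    fun x hx => hP.eq_penultimate_of_adj htree.isAcyclic hx
  have hleaf : ∀ x, T x u → x = P.penultimate :=
    fun x hx => hleafG x (hG ▸ underG_adj.2 ⟨(hT.ne hx).symm, Or.inr hx⟩)
  have hne := Fintype.two_lt_card_iff_exists_ne_ne (hT.ne hvu).symm
  rcases m with _ | m
  · have hW : ∀ x, x = u ∨ x = P.penultimate := fun x => by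
      by_contra! h
      have := hne.2 ⟨x, h⟩
      omega
    rw [zero_mul, Nat.sub_zero, arcCount_eq_ncard]
    exact ncard_le_ncard fun p hp =>
      ⟨hp, goodArc_of_forall_eq_or_eq hT hvu hW hp (hA.ne hp)⟩
  · obtain ⟨w', u', P', hP', hnil', hcase⟩ := hP.exists_induce_compl hnil (hne.1 (by omega))
    have hcard' : Fintype.card ({u}ᶜ : Set W) = m + 2 := by
      rw [Fintype.card_compl_set, hcard, Set.card_singleton]
      omega
    have IH := ih m (by omega) (restrictArcs T {u}ᶜ) (hT.restrictArcs _) (G.induce {u}ᶜ)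
      (by rw [underG_restrictArcs, hG])
      (htree.induce_compl_singleton_of_adj (P.adj_penultimate hnil).symm hleafG) hcard' P' hP'
      hnil' A hA
    have hstep := ncard_goodArcs_restrictArcs_le (plen := P.length) hA hT hvu hleaf
      (hcase.imp (And.imp_right fun h => by omega) id)
    rw [Nat.succ_mul]
    omega

end GoodArcs

theorem stmt_6_general (k n : ℕ)
    {W : Type*} [Fintype W]
    (T : W → W → Bool) (hT : Antidirected T)
    (htree : (underG T).IsTree) (hkT : arcCount T = k)
    (w v u : W) (Q : (underG T).Walk w v) (hadj : (underG T).Adj v u)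
    (hP : (Q.concat hadj).IsPath)
    (hcat : ∀ x : W, x ∈ (Q.concat hadj).support ∨
      ∃ y ∈ (Q.concat hadj).support, y ≠ w ∧ y ≠ u ∧ (underG T).Adj x y)
    (A : Fin n → Fin n → Bool) (hloop : Loopless A) :
    arcCount A - (k - 1) * n ≤
      {pq : Fin n × Fin n | A pq.1 pq.2 ∧
        GoodArc A T u v (Q.concat hadj).length pq}.ncard := by
  have hcard := arcCount_add_one_eq_card hT htree
  have h2 : 2 ≤ Fintype.card W := Fintype.one_lt_card_iff.2 ⟨v, u, hadj.ne⟩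
  have := le_ncard_goodArcs (k - 1) T hT _ rfl htree (by omega) (Q.concat hadj) ⟨hP, hcat⟩
    (by simp [Walk.not_nil_iff_lt_length]) A hloop
  rwa [Walk.penultimate_concat] at this

/-- A convex digraph of order `n` contains at least `a(D) − (k−1)·n` arcs that
are good for a given antidirected caterpillar `T` with `k` arcs (given with its spine:
the path `Q.concat hadj` ending with the final edge between `v` and the final vertex `u`). -/
theorem stmt_6 (k n : ℕ) (hk : 0 < k) (hn : 0 < n)
    {W : Type*} [Fintype W] [DecidableEq W]
    (T : W → W → Bool) (hT : Antidirected T)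
    (htree : (underG T).IsTree) (hkT : arcCount T = k)
    (w v u : W) (Q : (underG T).Walk w v) (hadj : (underG T).Adj v u)
    (hP : (Q.concat hadj).IsPath)
    (hcat : ∀ x : W, x ∈ (Q.concat hadj).support ∨
      ∃ y ∈ (Q.concat hadj).support, y ≠ w ∧ y ≠ u ∧ (underG T).Adj x y)
    (A : Fin n → Fin n → Bool) (hloop : Loopless A) :
    arcCount A - (k - 1) * n ≤
      {pq : Fin n × Fin n | A pq.1 pq.2 ∧
        GoodArc A T u v (Q.concat hadj).length pq}.ncard :=
  stmt_6_general k n T hT htree hkT w v u Q hadj hP hcat A hloop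
end

section
/- Let k and r be positive integers with r ≤ ⌈k/2⌉, and let H be a bipartite graph with parts A and B satisfying |A| = |B| and e(H) > (k−1)·|H|/2. Then there exists a subgraph H' of H with parts A' ⊆ A, B' ⊆ B such that: (1) e(H') > (k−1)·|H'|/2; (2) deg_{H'}(a) + deg_{H'}(b) ≥ k for every a ∈ A' and b ∈ B'; and moreover at least one of the following holds: (3-I) every vertex of A' has degree at least k/2 in H', every vertex of B' has degree at least r in H', there is a vertex a ∈ A' with deg_{H'}(a) ≥ k, and |A'| ≤ |B'|; or (3-II) every vertex of H' has degree at least k/2 in H', there is a vertex b ∈ B' with deg_{H'}(b) ≥ k, and every a ∈ A' satisfies deg_H(a) > k − r. -/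
open Finset

/-!
Take a pair `S ⊆ A`, `T ⊆ B` with `(k - 1)(|S| + |T|) < 2 e(S, T)` and either `|S| ≤ |T|` or every
vertex of `S` of degree more than `k - r` in `H`, and with `|S| + |T|` minimal. Deleting a vertex
of `S`, a vertex of `T` when the second alternative holds, or one vertex of each side when
`|S| ≤ |T|`, keeps the side condition, so by minimality it destroys the density; this bounds the
corresponding degrees from below by `k/2`, `k/2` and `k` (for the degree sum). Averaging over the
smaller side gives a vertex of degree at least `k` there. Finally, if `|S| ≤ |T|` but some `a ∈ S`
has degree at most `k - r` in `H`, the degree-sum bound against `a` forces every vertex of `T`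
to have degree at least `r`.
-/

section BipartiteDensePairs

variable {α β : Type*}

def edgesBetween (E : α → β → Bool) (S : Finset α) (T : Finset β) : ℕ :=
  ∑ a ∈ S, #{b ∈ T | E a b}

def bipRestrict [DecidableEq α] [DecidableEq β] (E : α → β → Bool) (S : Finset α) (T : Finset β) :
    α → β → Bool :=
  fun a b => decide (a ∈ S) && decide (b ∈ T) && E a b

def IsDensePair (k : ℕ) (E : α → β → Bool) (S : Finset α) (T : Finset β) : Prop :=
  (k - 1) * (#S + #T) < 2 * edgesBetween E S T

variable {k : ℕ} {E : α → β → Bool} {S : Finset α} {T : Finset β} {a : α} {b : β}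

theorem edgesBetween_flip : edgesBetween (flip E) T S = edgesBetween E S T := by
  simp only [edgesBetween, card_filter]
  exact sum_comm

theorem isDensePair_flip : IsDensePair k (flip E) T S ↔ IsDensePair k E S T := by
  rw [IsDensePair, IsDensePair, edgesBetween_flip, add_comm #T]

theorem card_filter_add_edgesBetween_erase_left [DecidableEq α] (ha : a ∈ S) :
    #{b ∈ T | E a b} + edgesBetween E (S.erase a) T = edgesBetween E S T :=
  add_sum_erase S (fun a => #{b ∈ T | E a b}) ha

theorem card_filter_add_edgesBetween_erase_right [DecidableEq β] (hb : b ∈ T) :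
    #{a ∈ S | E a b} + edgesBetween E S (T.erase b) = edgesBetween E S T := by
  rw [← edgesBetween_flip, ← edgesBetween_flip (E := E)]
  exact card_filter_add_edgesBetween_erase_left (E := flip E) hb

theorem bipArcCount_bipRestrict [Fintype α] [Fintype β] [DecidableEq α] [DecidableEq β] :
    bipArcCount (bipRestrict E S T) = edgesBetween E S T := by
  have hfilter : {p ∈ (univ : Finset (α × β)) | bipRestrict E S T p.1 p.2}
      = {p ∈ S ×ˢ T | E p.1 p.2} := by
    ext ⟨a, b⟩
    simp [bipRestrict, and_assoc]
  rw [bipArcCount, hfilter, card_filter, sum_product, edgesBetween]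
  simp only [card_filter]

theorem bipDegA_bipRestrict [Fintype β] [DecidableEq α] [DecidableEq β] (ha : a ∈ S) :
    bipDegA (bipRestrict E S T) a = #{b ∈ T | E a b} := by
  rw [bipDegA]
  congr 1
  ext b
  simp [bipRestrict, ha]

theorem bipDegB_bipRestrict [Fintype α] [DecidableEq α] [DecidableEq β] (hb : b ∈ T) :
    bipDegB (bipRestrict E S T) b = #{a ∈ S | E a b} := by
  rw [bipDegB]
  congr 1
  ext a
  simp [bipRestrict, hb]

theorem bipRestrict_spec [DecidableEq α] [DecidableEq β] (h : bipRestrict E S T a b) :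
    E a b ∧ a ∈ S ∧ b ∈ T := by
  simpa [bipRestrict, and_comm, and_assoc] using h

namespace IsDensePair

theorem le_two_mul_card_filter_left [DecidableEq α] (h : IsDensePair k E S T) (ha : a ∈ S)
    (h' : ¬ IsDensePair k E (S.erase a) T) : k ≤ 2 * #{b ∈ T | E a b} := by
  rw [IsDensePair, ← card_erase_add_one ha, ← card_filter_add_edgesBetween_erase_left ha] at h
  rw [IsDensePair, not_lt] at h'
  have hsplit : (k - 1) * (#(S.erase a) + 1 + #T) = (k - 1) * (#(S.erase a) + #T) + (k - 1) := by
    ring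
  omega

theorem le_two_mul_card_filter_right [DecidableEq β] (h : IsDensePair k E S T) (hb : b ∈ T)
    (h' : ¬ IsDensePair k E S (T.erase b)) : k ≤ 2 * #{a ∈ S | E a b} :=
  (isDensePair_flip.2 h).le_two_mul_card_filter_left hb (mt isDensePair_flip.1 h')

theorem le_card_filter_add_card_filter [DecidableEq α] [DecidableEq β] (h : IsDensePair k E S T)
    (ha : a ∈ S) (hb : b ∈ T)
    (h' : ¬ IsDensePair k E (S.erase a) (T.erase b)) :
    k ≤ #{b ∈ T | E a b} + #{a ∈ S | E a b} := by
  have hdeg : #{a' ∈ S.erase a | E a' b} ≤ #{a' ∈ S | E a' b} :=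
    card_le_card (filter_subset_filter _ (erase_subset a S))
  rw [IsDensePair, ← card_erase_add_one ha, ← card_erase_add_one hb,
    ← card_filter_add_edgesBetween_erase_left ha,
    ← card_filter_add_edgesBetween_erase_right hb] at h
  rw [IsDensePair, not_lt] at h'
  have hsplit : (k - 1) * (#(S.erase a) + 1 + (#(T.erase b) + 1))
      = (k - 1) * (#(S.erase a) + #(T.erase b)) + (k - 1) + (k - 1) := by
    ring
  omega

theorem exists_le_card_filter_left (h : IsDensePair k E S T) (hST : #S ≤ #T) :
    ∃ a ∈ S, k ≤ #{b ∈ T | E a b} := by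
  have hsum : ∑ _a ∈ S, (k - 1) < ∑ a ∈ S, #{b ∈ T | E a b} := by
    rw [sum_const, smul_eq_mul, ← edgesBetween]
    rw [IsDensePair] at h
    nlinarith
  obtain ⟨a, ha, hlt⟩ := exists_lt_of_sum_lt hsum
  exact ⟨a, ha, by omega⟩

theorem exists_le_card_filter_right (h : IsDensePair k E S T) (hTS : #T ≤ #S) :
    ∃ b ∈ T, k ≤ #{a ∈ S | E a b} :=
  (isDensePair_flip.2 h).exists_le_card_filter_left hTS

end IsDensePair

end BipartiteDensePairs

section Admissible

variable {α β : Type*} [Fintype β] {k r : ℕ} {E : α → β → Bool} {S : Finset α} {T : Finset β}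
  {a : α} {b : β}

structure Admissible (k r : ℕ) (E : α → β → Bool) (S : Finset α) (T : Finset β) : Prop where
  isDensePair : IsDensePair k E S T
  card_le_or_forall : #S ≤ #T ∨ ∀ a ∈ S, k - r < bipDegA E a

structure IsMinimalAdmissible (k r : ℕ) (E : α → β → Bool) (S : Finset α) (T : Finset β) :
    Prop where
  admissible : Admissible k r E S T
  not_admissible : ∀ S' T', #S' + #T' < #S + #T → ¬ Admissible k r E S' T'

theorem admissible_univ [Fintype α] (hcard : Fintype.card α = Fintype.card β)
    (hE : (k - 1) * (Fintype.card α + Fintype.card β) < 2 * bipArcCount E) :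
    Admissible k r E univ univ := by
  classical
  have hrestrict : bipRestrict E univ univ = E := by
    funext a b
    simp [bipRestrict]
  refine ⟨?_, Or.inl (by simp [hcard])⟩
  rwa [IsDensePair, ← bipArcCount_bipRestrict, hrestrict, card_univ, card_univ]

theorem exists_isMinimalAdmissible {S₀ : Finset α} {T₀ : Finset β}
    (h₀ : Admissible k r E S₀ T₀) : ∃ S T, IsMinimalAdmissible k r E S T := by
  obtain ⟨⟨S, T⟩, hST, hmin⟩ := (measure fun p : Finset α × Finset β => #p.1 + #p.2).wf.has_min
    {p | Admissible k r E p.1 p.2} ⟨(S₀, T₀), h₀⟩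
  exact ⟨S, T, hST, fun S' T' hlt h' => hmin (S', T') h' hlt⟩

namespace IsMinimalAdmissible

theorem le_two_mul_card_filter_left [DecidableEq α] (h : IsMinimalAdmissible k r E S T)
    (ha : a ∈ S) : k ≤ 2 * #{b ∈ T | E a b} := by
  refine h.admissible.isDensePair.le_two_mul_card_filter_left ha fun hdense =>
    h.not_admissible _ _ ?_ ⟨hdense, ?_⟩
  · rw [card_erase_of_mem ha]
    have := card_pos.2 ⟨a, ha⟩
    omega
  · rcases h.admissible.card_le_or_forall with hST | hgood
    · exact Or.inl (card_erase_le.trans hST)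
    · exact Or.inr fun a' ha' => hgood a' (mem_of_mem_erase ha')

theorem le_two_mul_card_filter_right [DecidableEq β] (h : IsMinimalAdmissible k r E S T)
    (hgood : ∀ a ∈ S, k - r < bipDegA E a) (hb : b ∈ T) : k ≤ 2 * #{a ∈ S | E a b} := by
  refine h.admissible.isDensePair.le_two_mul_card_filter_right hb fun hdense =>
    h.not_admissible _ _ ?_ ⟨hdense, Or.inr hgood⟩
  rw [card_erase_of_mem hb]
  have := card_pos.2 ⟨b, hb⟩
  omega

theorem le_card_filter_add_card_filter_of_card_le [DecidableEq α] [DecidableEq β]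
    (h : IsMinimalAdmissible k r E S T) (hST : #S ≤ #T) (ha : a ∈ S) (hb : b ∈ T) :
    k ≤ #{b ∈ T | E a b} + #{a ∈ S | E a b} := by
  refine h.admissible.isDensePair.le_card_filter_add_card_filter ha hb fun hdense =>
    h.not_admissible _ _ ?_ ⟨hdense, Or.inl ?_⟩
  all_goals
    rw [card_erase_of_mem ha, card_erase_of_mem hb]
    have := card_pos.2 ⟨a, ha⟩
    omega

theorem le_card_filter_add_card_filter [DecidableEq α] [DecidableEq β]
    (h : IsMinimalAdmissible k r E S T) (ha : a ∈ S) (hb : b ∈ T) :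
    k ≤ #{b ∈ T | E a b} + #{a ∈ S | E a b} := by
  by_cases hgood : ∀ a ∈ S, k - r < bipDegA E a
  · have hA := h.le_two_mul_card_filter_left ha
    have hB := h.le_two_mul_card_filter_right hgood hb
    omega
  · have hST := h.admissible.card_le_or_forall.resolve_right hgood
    exact h.le_card_filter_add_card_filter_of_card_le hST ha hb

theorem le_card_filter_right [DecidableEq α] [DecidableEq β] (h : IsMinimalAdmissible k r E S T)
    (hrk : r ≤ (k + 1) / 2) (hST : #S ≤ #T) (hb : b ∈ T) : r ≤ #{a ∈ S | E a b} := by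
  by_cases hgood : ∀ a ∈ S, k - r < bipDegA E a
  · have := h.le_two_mul_card_filter_right hgood hb
    omega
  · push Not at hgood
    obtain ⟨a, ha, hlow⟩ := hgood
    have hsum := h.le_card_filter_add_card_filter_of_card_le hST ha hb
    have hdeg : #{b ∈ T | E a b} ≤ bipDegA E a :=
      card_le_card (filter_subset_filter _ (subset_univ T))
    omega

end IsMinimalAdmissible

end Admissible

theorem stmt_10_general (k r : ℕ) (hrk : r ≤ (k + 1) / 2)
    {α β : Type*} [Fintype α] [DecidableEq α] [Fintype β] [DecidableEq β]
    (E : α → β → Bool) (hcard : Fintype.card α = Fintype.card β)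
    (hE : (k - 1) * (Fintype.card α + Fintype.card β) < 2 * bipArcCount E) :
    ∃ (A' : Finset α) (B' : Finset β) (E' : α → β → Bool),
      (∀ a b, E' a b → E a b ∧ a ∈ A' ∧ b ∈ B') ∧
      (k - 1) * (A'.card + B'.card) < 2 * bipArcCount E' ∧
      (∀ a ∈ A', ∀ b ∈ B', k ≤ bipDegA E' a + bipDegB E' b) ∧
      (((∀ a ∈ A', k ≤ 2 * bipDegA E' a) ∧ (∀ b ∈ B', r ≤ bipDegB E' b) ∧
          (∃ a ∈ A', k ≤ bipDegA E' a) ∧ A'.card ≤ B'.card) ∨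
        ((∀ a ∈ A', k ≤ 2 * bipDegA E' a) ∧ (∀ b ∈ B', k ≤ 2 * bipDegB E' b) ∧
          (∃ b ∈ B', k ≤ bipDegB E' b) ∧ (∀ a ∈ A', k - r < bipDegA E a))) := by
  obtain ⟨S, T, h⟩ := exists_isMinimalAdmissible (r := r) (admissible_univ hcard hE)
  refine ⟨S, T, bipRestrict E S T, fun a b => bipRestrict_spec, ?_, ?_, ?_⟩
  · rw [bipArcCount_bipRestrict]
    exact h.admissible.isDensePair
  · intro a ha b hb
    rw [bipDegA_bipRestrict ha, bipDegB_bipRestrict hb]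
    exact h.le_card_filter_add_card_filter ha hb
  have hdegA : ∀ a ∈ S, k ≤ 2 * bipDegA (bipRestrict E S T) a := fun a ha => by
    rw [bipDegA_bipRestrict ha]
    exact h.le_two_mul_card_filter_left ha
  rcases le_or_gt #S #T with hST | hTS
  · obtain ⟨a, ha, hka⟩ := h.admissible.isDensePair.exists_le_card_filter_left hST
    refine Or.inl ⟨hdegA, fun b hb => ?_, ⟨a, ha, by rwa [bipDegA_bipRestrict ha]⟩, hST⟩
    rw [bipDegB_bipRestrict hb]
    exact h.le_card_filter_right hrk hST hb
  · have hgood := h.admissible.card_le_or_forall.resolve_left hTS.not_ge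
    obtain ⟨b, hb, hkb⟩ := h.admissible.isDensePair.exists_le_card_filter_right hTS.le
    refine Or.inr ⟨hdegA, fun b hb => ?_, ⟨b, hb, by rwa [bipDegB_bipRestrict hb]⟩, hgood⟩
    rw [bipDegB_bipRestrict hb]
    exact h.le_two_mul_card_filter_right hgood hb

/-- The bipartite subgraph lemma (Lemma `lemma:bipartite` of the paper). -/
theorem stmt_10 (k r : ℕ) (hk : 0 < k) (hr : 0 < r) (hrk : r ≤ (k + 1) / 2)
    {α β : Type*} [Fintype α] [DecidableEq α] [Fintype β] [DecidableEq β]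
    (E : α → β → Bool) (hcard : Fintype.card α = Fintype.card β)
    (hE : (k - 1) * (Fintype.card α + Fintype.card β) < 2 * bipArcCount E) :
    ∃ (A' : Finset α) (B' : Finset β) (E' : α → β → Bool),
      (∀ a b, E' a b → E a b ∧ a ∈ A' ∧ b ∈ B') ∧
      (k - 1) * (A'.card + B'.card) < 2 * bipArcCount E' ∧
      (∀ a ∈ A', ∀ b ∈ B', k ≤ bipDegA E' a + bipDegB E' b) ∧
      (((∀ a ∈ A', k ≤ 2 * bipDegA E' a) ∧ (∀ b ∈ B', r ≤ bipDegB E' b) ∧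
          (∃ a ∈ A', k ≤ bipDegA E' a) ∧ A'.card ≤ B'.card) ∨
        ((∀ a ∈ A', k ≤ 2 * bipDegA E' a) ∧ (∀ b ∈ B', k ≤ 2 * bipDegB E' b) ∧
          (∃ b ∈ B', k ≤ bipDegB E' b) ∧ (∀ a ∈ A', k - r < bipDegA E a))) :=
  stmt_10_general k r hrk E hcard hE
end

section
/- Let k be a positive integer, set s = ⌈k/12⌉, let D be a 𝒦_{2,s}-free digraph, and let S be a set of at most k vertices of D. Then for any three pairwise distinct vertices a, b, c of D and any signs ⋆_a, ⋆_b, ⋆_c ∈ {+,−}, we have |N^{⋆_a}(a) ∩ S| + |N^{⋆_b}(b) ∩ S| + |N^{⋆_c}(c) ∩ S| < 5k/4. -/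
open Finset

/-! Any two of the three signed neighbourhoods share fewer than `s = ⌈k/12⌉` vertices, so by
inclusion–exclusion the three traces on `S` have total size at most `|S| + 3(s - 1) < k + k/4`. -/

theorem Finset.card_add_card_add_card_le {α : Type*} [DecidableEq α] (A B C : Finset α) :
    #A + #B + #C ≤ #(A ∪ B ∪ C) + #(A ∩ B) + #(A ∩ C) + #(B ∩ C) := by
  have hAB := Finset.card_union_add_card_inter A B
  have hABC := Finset.card_union_add_card_inter (A ∪ B) C
  have hC : #((A ∪ B) ∩ C) ≤ #(A ∩ C) + #(B ∩ C) := by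
    rw [Finset.union_inter_distrib_right]
    exact Finset.card_union_le _ _
  omega

theorem Loopless.self_notMem_nbr {V : Type*} [Fintype V] {D : V → V → Bool}
    (hloop : Loopless D) (sx : Bool) (x : V) : x ∉ nbr D sx x := by
  cases sx <;> simp [nbr, outNbr, inNbr, hloop x]

theorem K2sFree.card_inter_nbr_lt {V : Type*} [Fintype V] [DecidableEq V] {D : V → V → Bool}
    {s : ℕ} (hfree : K2sFree D s) (hloop : Loopless D) {x y : V} (hxy : x ≠ y) (sx sy : Bool) :
    #(nbr D sx x ∩ nbr D sy y) < s := by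
  by_contra! hs
  obtain ⟨T, hT, hTcard⟩ := Finset.exists_subset_card_eq hs
  exact hfree ⟨x, y, sx, sy, T, hxy, hTcard,
    fun hx => hloop.self_notMem_nbr sx x (Finset.mem_inter.1 (hT hx)).1,
    fun hy => hloop.self_notMem_nbr sy y (Finset.mem_inter.1 (hT hy)).2, hT⟩

theorem K2sFree.card_inter_nbr_inter_lt {V : Type*} [Fintype V] [DecidableEq V]
    {D : V → V → Bool} {s : ℕ} (hfree : K2sFree D s) (hloop : Loopless D) {x y : V}
    (hxy : x ≠ y) (sx sy : Bool) (S : Finset V) :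
    #((nbr D sx x ∩ S) ∩ (nbr D sy y ∩ S)) < s :=
  (Finset.card_le_card (Finset.inter_subset_inter Finset.inter_subset_left
    Finset.inter_subset_left)).trans_lt (hfree.card_inter_nbr_lt hloop hxy sx sy)

theorem stmt_14_general (k : ℕ)
    {V : Type*} [Fintype V] [DecidableEq V]
    (D : V → V → Bool) (hloop : Loopless D)
    (hfree : K2sFree D ((k + 11) / 12))
    (S : Finset V) (hS : S.card ≤ k)
    (a b c : V) (hab : a ≠ b) (hac : a ≠ c) (hbc : b ≠ c)
    (sa sb sc : Bool) :
    4 * ((nbr D sa a ∩ S).card + (nbr D sb b ∩ S).card + (nbr D sc c ∩ S).card)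
      < 5 * k := by
  have hs : (k + 11) / 12 * 12 ≤ k + 11 := Nat.div_mul_le_self _ _
  have hAB := hfree.card_inter_nbr_inter_lt hloop hab sa sb S
  have hAC := hfree.card_inter_nbr_inter_lt hloop hac sa sc S
  have hBC := hfree.card_inter_nbr_inter_lt hloop hbc sb sc S
  have hunion : #((nbr D sa a ∩ S) ∪ (nbr D sb b ∩ S) ∪ (nbr D sc c ∩ S)) ≤ #S :=
    Finset.card_le_card (Finset.union_subset (Finset.union_subset Finset.inter_subset_right
      Finset.inter_subset_right) Finset.inter_subset_right)
  have hincl := Finset.card_add_card_add_card_le (nbr D sa a ∩ S) (nbr D sb b ∩ S) (nbr D sc c ∩ S)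
  omega

/-- In a `𝒦_{2,s}`-free digraph (s = ⌈k/12⌉), for any set `S` of at most `k`
vertices and any three pairwise distinct vertices with signs, the sum of the sizes of the
signed neighbourhoods intersected with `S` is less than `5k/4`. -/
theorem stmt_14 (k : ℕ) (hk : 0 < k)
    {V : Type*} [Fintype V] [DecidableEq V]
    (D : V → V → Bool) (hloop : Loopless D)
    (hfree : K2sFree D ((k + 11) / 12))
    (S : Finset V) (hS : S.card ≤ k)
    (a b c : V) (hab : a ≠ b) (hac : a ≠ c) (hbc : b ≠ c)
    (sa sb sc : Bool) :
    4 * ((nbr D sa a ∩ S).card + (nbr D sb b ∩ S).card + (nbr D sc c ∩ S).card)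
      < 5 * k :=
  stmt_14_general k D hloop hfree S hS a b c hab hac hbc sa sb sc
end
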